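/- Let L cells each have per-cell utilities u_i^l ≥ 0 for agents i ∈ Fin N, and define the frame-level objective over masks m : Fin N × Fin L → {0,1} as Σ_l [Σ_i m_i^l u_i^l − (1/2) Σ_{i≠j} m_i^l m_j^l min(u_i^l, u_j^l)] subject to the budget (number of selected (i,l) pairs) ≤ K, each pair having unit cost. Then the optimum equals the sum of the K largest values among {max_i u_i^l : l ∈ Fin L} (padding with zeros if fewer than K cells have positive max), and is achieved by selecting, in each chosen cell, a single agent attaining max_i u_i^l. -/

import Mathlib

open Finset

lemma aux_sum_le {α : Type*} [DecidableEq α] (v : α → ℝ) (A B : Finset α)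
    (hv : ∀ b ∈ B, 0 ≤ v b) (hcard : A.card ≤ B.card)
    (hle : ∀ a ∈ A, ∀ b ∈ B, v a ≤ v b) :
    ∑ a ∈ A, v a ≤ ∑ b ∈ B, v b := by
  rcases A.eq_empty_or_nonempty with rfl | hA
  · simpa using Finset.sum_nonneg hv
  · have hB : B.Nonempty := Finset.card_pos.mp (lt_of_lt_of_le (Finset.card_pos.mpr hA) hcard)
    obtain ⟨b0, hb0, hb0eq⟩ := Finset.exists_mem_eq_inf' hB v
    have h1 : ∑ a ∈ A, v a ≤ A.card • (B.inf' hB v) := by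
      apply Finset.sum_le_card_nsmul
      intro a ha
      rw [hb0eq]; exact hle a ha b0 hb0
    have h2 : B.card • (B.inf' hB v) ≤ ∑ b ∈ B, v b := by
      apply Finset.card_nsmul_le_sum
      intro b hb
      exact Finset.inf'_le v hb
    have h3 : A.card • (B.inf' hB v) ≤ B.card • (B.inf' hB v) := by
      have h0 : (0:ℝ) ≤ B.inf' hB v := by rw [hb0eq]; exact hv b0 hb0
      simpa [nsmul_eq_mul] using mul_le_mul_of_nonneg_right (by exact_mod_cast hcard) h0
    linarith

lemma topK_sum {α : Type*} [DecidableEq α] (v : α → ℝ) (hv : ∀ a, 0 ≤ v a)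
    (S T : Finset α) (hcard : S.card ≤ T.card)
    (htop : ∀ l ∈ T, ∀ l' ∉ T, v l' ≤ v l) :
    ∑ l ∈ S, v l ≤ ∑ l ∈ T, v l := by
  have hS : ∑ l ∈ S, v l = ∑ l ∈ S ∩ T, v l + ∑ l ∈ S \ T, v l := by
    rw [Finset.sum_inter_add_sum_sdiff]
  have hT : ∑ l ∈ T, v l = ∑ l ∈ T ∩ S, v l + ∑ l ∈ T \ S, v l := by
    rw [Finset.sum_inter_add_sum_sdiff]
  have hcard' : (S \ T).card ≤ (T \ S).card := by
    have := Finset.card_sdiff_add_card_inter S T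
    have := Finset.card_sdiff_add_card_inter T S
    have h3 : (T ∩ S).card = (S ∩ T).card := by rw [Finset.inter_comm]
    omega
  have key : ∑ l ∈ S \ T, v l ≤ ∑ l ∈ T \ S, v l := by
    apply aux_sum_le v _ _ (fun b _ => hv b) hcard'
    intro a ha b hb
    exact htop b (Finset.mem_sdiff.mp hb).1 a (Finset.mem_sdiff.mp ha).2
  rw [hS, hT, Finset.inter_comm]
  linarith

lemma cell_bound {N : ℕ} (w : Fin N → ℝ) (hw : ∀ i, 0 ≤ w i) (mv : Fin N → ℝ)
    (hm : ∀ i, mv i = 0 ∨ mv i = 1) (M : ℝ) (hM : ∀ i, w i ≤ M) :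
    (∑ i, mv i * w i) -
      (1 / 2) * ∑ i, ∑ j, (if i ≠ j then mv i * mv j * min (w i) (w j) else 0)
    ≤ if (Finset.univ.filter (fun i => mv i = 1)).Nonempty then M else 0 := by
  classical
  set S := Finset.univ.filter (fun i => mv i = 1) with hSdef
  have hmem : ∀ i, i ∈ S ↔ mv i = 1 := by intro i; simp [hSdef]
  have h1 : (∑ i, mv i * w i) = ∑ i ∈ S, w i := by
    rw [Finset.sum_filter]
    apply Finset.sum_congr rfl
    intro i _
    rcases hm i with h | h <;> simp [h]
  have h2 : (∑ i, ∑ j, (if i ≠ j then mv i * mv j * min (w i) (w j) else 0))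
      = ∑ i ∈ S, ∑ j ∈ S, (if i ≠ j then min (w i) (w j) else 0) := by
    rw [Finset.sum_filter]
    apply Finset.sum_congr rfl
    intro i _
    rcases hm i with h | h
    · simp [h]
    · rw [if_pos h, Finset.sum_filter]
      apply Finset.sum_congr rfl
      intro j _
      rcases hm j with h' | h' <;> by_cases hij : i = j <;> simp [h, h', hij]
  rw [h1, h2]
  rcases S.eq_empty_or_nonempty with hS | hS
  · simp [hS]
  · rw [if_pos hS]
    obtain ⟨i0, hi0, hmax⟩ := S.exists_max_image w hS
    have hA : ∑ i ∈ S, w i = w i0 + ∑ i ∈ S.erase i0, w i :=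
      (Finset.add_sum_erase S w hi0).symm
    have hA2 : ∑ i ∈ S.erase i0, w i = ∑ i ∈ S.erase i0, min (w i) (w i0) := by
      apply Finset.sum_congr rfl
      intro i hi
      exact (min_eq_left (hmax i (Finset.mem_of_mem_erase hi))).symm
    have hC : 2 * (∑ i ∈ S.erase i0, min (w i) (w i0))
        ≤ ∑ i ∈ S, ∑ j ∈ S, (if i ≠ j then min (w i) (w j) else 0) := by
      rw [← Finset.add_sum_erase S _ hi0]
      have hfirst : (∑ j ∈ S, (if i0 ≠ j then min (w i0) (w j) else 0))
          = ∑ j ∈ S.erase i0, min (w i0) (w j) := by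
        rw [← Finset.sum_filter, Finset.filter_ne]
      have hsecond : ∑ i ∈ S.erase i0, min (w i) (w i0)
          ≤ ∑ i ∈ S.erase i0, ∑ j ∈ S, (if i ≠ j then min (w i) (w j) else 0) := by
        apply Finset.sum_le_sum
        intro i hi
        have hne : i ≠ i0 := Finset.ne_of_mem_erase hi
        have : min (w i) (w i0) = if i ≠ i0 then min (w i) (w i0) else 0 := by
          simp [hne]
        rw [this]
        apply Finset.single_le_sum (f := fun j => if i ≠ j then min (w i) (w j) else 0)
          (fun j _ => by by_cases h : i ≠ j <;> simp [h, le_min (hw i) (hw j)]) hi0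
      have hcomm : ∑ j ∈ S.erase i0, min (w i0) (w j)
          = ∑ i ∈ S.erase i0, min (w i) (w i0) := by
        apply Finset.sum_congr rfl; intro j _; rw [min_comm]
      linarith [hfirst, hsecond]
    have := hM i0
    rw [hA, hA2]
    linarith

/-- Frame-level objective for a binary mask `m` over agents × cells. -/
noncomputable def frameU {N L : ℕ} (u : Fin N → Fin L → ℝ)
    (m : Fin N → Fin L → ℝ) : ℝ :=
  ∑ l, ((∑ i, m i l * u i l) -
    (1 / 2) * ∑ i, ∑ j, if i ≠ j then m i l * m j l * min (u i l) (u j l) else 0)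

/-- Frame-level optimality under a unit-cost budget of `K` selected
agent-cell pairs: the optimum equals the sum of the `K` largest cell maxima
`max_i u_i^l` (padding with zeros when fewer than `K` cells exist), and is
achieved by a mask selecting in each chosen cell a single agent attaining the
cell maximum. -/
theorem frame_topK_optimality {N L : ℕ} (hN : 0 < N)
    (u : Fin N → Fin L → ℝ) (hu : ∀ i l, 0 ≤ u i l) (K : ℕ)
    (maxval : Fin L → ℝ)
    (hmaxval : ∀ l, maxval l =
      Finset.univ.sup' (Finset.univ_nonempty_iff.mpr (Fin.pos_iff_nonempty.mp hN))
        (fun i => u i l))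
    (T : Finset (Fin L)) (hTcard : T.card = min K L)
    (hTtop : ∀ l ∈ T, ∀ l' ∉ T, maxval l' ≤ maxval l) :
    (∀ m : Fin N → Fin L → ℝ, (∀ i l, m i l = 0 ∨ m i l = 1) →
        (Finset.univ.filter (fun p : Fin N × Fin L => m p.1 p.2 = 1)).card ≤ K →
        frameU u m ≤ ∑ l ∈ T, maxval l) ∧
      (∃ m : Fin N → Fin L → ℝ, (∀ i l, m i l = 0 ∨ m i l = 1) ∧
        (Finset.univ.filter (fun p : Fin N × Fin L => m p.1 p.2 = 1)).card ≤ K ∧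
        (∀ l, (Finset.univ.filter (fun i => m i l = 1)).card ≤ 1) ∧
        (∀ i l, m i l = 1 → l ∈ T ∧ u i l = maxval l) ∧
        frameU u m = ∑ l ∈ T, maxval l) := by
  classical
  have hNE : (Finset.univ : Finset (Fin N)).Nonempty :=
    Finset.univ_nonempty_iff.mpr (Fin.pos_iff_nonempty.mp hN)
  have hle_max : ∀ i l, u i l ≤ maxval l := by
    intro i l
    rw [hmaxval l]
    exact Finset.le_sup' (fun i => u i l) (Finset.mem_univ i)
  have hmax_nonneg : ∀ l, 0 ≤ maxval l := by
    intro l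
    obtain ⟨i⟩ := Fin.pos_iff_nonempty.mp hN
    exact le_trans (hu i l) (hle_max i l)
  constructor
  · -- upper bound
    intro m hm hbudget
    set S : Fin L → Finset (Fin N) := fun l => Finset.univ.filter (fun i => m i l = 1) with hSdef
    set A : Finset (Fin L) := Finset.univ.filter (fun l => (S l).Nonempty) with hAdef
    have step1 : frameU u m ≤ ∑ l, (if (S l).Nonempty then maxval l else 0) := by
      apply Finset.sum_le_sum
      intro l _
      exact cell_bound (fun i => u i l) (fun i => hu i l) (fun i => m i l) (fun i => hm i l)
        (maxval l) (fun i => hle_max i l)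
    have step2 : ∑ l, (if (S l).Nonempty then maxval l else 0) = ∑ l ∈ A, maxval l := by
      rw [hAdef, Finset.sum_filter]
    have hAcard : A.card ≤ K := by
      refine le_trans ?_ hbudget
      apply Finset.card_le_card_of_injOn
        (fun l => ((if h : (S l).Nonempty then h.choose else ⟨0, hN⟩ : Fin N), l))
      · intro l hl
        have hl' : (S l).Nonempty := by
          rw [hAdef] at hl; exact (Finset.mem_filter.mp hl).2
        rw [Finset.mem_coe, Finset.mem_filter]
        refine ⟨Finset.mem_univ _, ?_⟩
        simp only [dif_pos hl']
        have h2 := hl'.choose_spec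
        simp only [hSdef, Finset.mem_filter] at h2
        exact h2.2
      · intro a _ b _ hab
        exact congrArg Prod.snd hab
    have hAT : A.card ≤ T.card := by
      have hAL : A.card ≤ L := by
        have := Finset.card_le_card (Finset.subset_univ A)
        simpa using this
      omega
    calc frameU u m ≤ ∑ l ∈ A, maxval l := by rw [← step2]; exact step1
      _ ≤ ∑ l ∈ T, maxval l := topK_sum maxval hmax_nonneg A T hAT hTtop
  · -- existence
    have hpick : ∀ l, ∃ i : Fin N, u i l = maxval l := by
      intro l
      obtain ⟨b, _, hb⟩ := Finset.exists_mem_eq_sup' hNE (fun i => u i l)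
      exact ⟨b, by rw [hmaxval l, hb]⟩
    choose pick hpickeq using hpick
    refine ⟨fun i l => if l ∈ T ∧ i = pick l then 1 else 0, ?_, ?_, ?_, ?_, ?_⟩
    · intro i l; by_cases h : l ∈ T ∧ i = pick l <;> simp [h]
    · have himg : (Finset.univ.filter
          (fun p : Fin N × Fin L => (if p.2 ∈ T ∧ p.1 = pick p.2 then (1:ℝ) else 0) = 1))
          = T.image (fun l => (pick l, l)) := by
        ext ⟨i, l⟩
        simp only [Finset.mem_filter, Finset.mem_univ, true_and, Finset.mem_image]
        constructor
        · intro h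
          by_cases hc : l ∈ T ∧ i = pick l
          · exact ⟨l, hc.1, by rw [hc.2]⟩
          · rw [if_neg hc] at h; norm_num at h
        · rintro ⟨l', hl', heq⟩
          obtain ⟨h1, h2⟩ := Prod.mk.injEq .. ▸ heq
          have : l' = l := congrArg Prod.snd heq
          subst this
          have : i = pick l' := (congrArg Prod.fst heq).symm
          simp [this, hl']
      rw [himg]
      calc (T.image (fun l => (pick l, l))).card ≤ T.card := Finset.card_image_le
        _ = min K L := hTcard
        _ ≤ K := min_le_left K L
    · intro l
      by_cases hl : l ∈ T
      · have : (Finset.univ.filter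
            (fun i => (if l ∈ T ∧ i = pick l then (1:ℝ) else 0) = 1)) = {pick l} := by
          ext i
          simp only [Finset.mem_filter, Finset.mem_univ, true_and, Finset.mem_singleton]
          constructor
          · intro h
            by_cases hc : l ∈ T ∧ i = pick l
            · exact hc.2
            · rw [if_neg hc] at h; norm_num at h
          · intro h; simp [h, hl]
        rw [this]; simp
      · have : (Finset.univ.filter
            (fun i => (if l ∈ T ∧ i = pick l then (1:ℝ) else 0) = 1)) = ∅ := by
          ext i
          simp only [Finset.mem_filter, Finset.mem_univ, true_and, Finset.notMem_empty,
            iff_false]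
          intro h
          rw [if_neg (fun hc => hl hc.1)] at h; norm_num at h
        rw [this]; simp
    · intro i l h
      dsimp only at h
      by_cases hc : l ∈ T ∧ i = pick l
      · exact ⟨hc.1, by rw [hc.2]; exact hpickeq l⟩
      · rw [if_neg hc] at h; norm_num at h
    · unfold frameU
      have hcell : ∀ l : Fin L,
          ((∑ i, (if l ∈ T ∧ i = pick l then (1:ℝ) else 0) * u i l) -
            (1 / 2) * ∑ i, ∑ j, if i ≠ j then
              (if l ∈ T ∧ i = pick l then (1:ℝ) else 0) *
              (if l ∈ T ∧ j = pick l then (1:ℝ) else 0) * min (u i l) (u j l) else 0)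
          = if l ∈ T then maxval l else 0 := by
        intro l
        have hcross : (∑ i, ∑ j, if i ≠ j then
            (if l ∈ T ∧ i = pick l then (1:ℝ) else 0) *
            (if l ∈ T ∧ j = pick l then (1:ℝ) else 0) * min (u i l) (u j l) else 0) = 0 := by
          apply Finset.sum_eq_zero
          intro i _
          apply Finset.sum_eq_zero
          intro j _
          by_cases hij : i = j
          · simp [hij]
          · rw [if_pos hij]
            by_cases hci : l ∈ T ∧ i = pick l
            · have hcj : ¬(l ∈ T ∧ j = pick l) := fun hcj => hij (hci.2.trans hcj.2.symm)
              simp [hcj]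
            · simp [hci]
        rw [hcross]
        by_cases hl : l ∈ T
        · have : (∑ i, (if l ∈ T ∧ i = pick l then (1:ℝ) else 0) * u i l)
              = ∑ i, (if i = pick l then u i l else 0) := by
            apply Finset.sum_congr rfl
            intro i _
            by_cases hc : i = pick l <;> simp [hc, hl]
          rw [this, Finset.sum_ite_eq' Finset.univ (pick l) (fun i => u i l)]
          simp [hl, hpickeq l]
        · have : (∑ i, (if l ∈ T ∧ i = pick l then (1:ℝ) else 0) * u i l) = 0 := by
            apply Finset.sum_eq_zero
            intro i _
            rw [if_neg (fun hc => hl hc.1)]; ring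
          rw [this]
          simp [hl]
      rw [Finset.sum_congr rfl (fun l _ => hcell l), ← Finset.sum_filter]
      congr 1
      simp
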